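/- Let M₀ be a connected finite partial linear space in which every point has the same degree κ and every line the same size ρ with ρ ≠ κ, and let G be a cyclic group that is either infinite or of even order greater than 2. Then every automorphism of ⊛_G(∘, M₀) maps the family {im(ε_i) : i ∈ G} of closed substructures onto itself (i.e., permutes this covering). -/

import Mathlib

/-! In `⊛_G(∘, M₀)` an element of `M₀` of degree `d` yields points and lines of degree `d + 1`.
An incidence inside a copy `im(ε_i)` joins a point and a line of `M₀`, whose degrees `κ`, `ρ`
differ, while an incidence between consecutive copies joins two images of one element of `M₀`,
of equal degree. So automorphisms preserve incidence inside the copies. As `M₀` is connected,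
the points of `im(ε_i)` form one class of the equivalence generated by collinearity along such
lines, and these classes, hence the copies, are permuted. -/

/-- A partial linear space: every line has at least two points, every point is on
at least two lines, and two distinct points are on at most one common line. -/
def IsPLS {P L : Type*} (inc : P → L → Prop) : Prop :=
  (∀ l, ∃ a b, a ≠ b ∧ inc a l ∧ inc b l) ∧
  (∀ a, ∃ l m, l ≠ m ∧ inc a l ∧ inc a m) ∧
  (∀ a b l m, inc a l → inc b l → inc a m → inc b m → a = b ∨ l = m)

/-- An isomorphism of incidence structures. -/
structure IncIso {P₁ L₁ P₂ L₂ : Type*} (inc₁ : P₁ → L₁ → Prop) (inc₂ : P₂ → L₂ → Prop) where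
  pt : P₁ ≃ P₂
  ln : L₁ ≃ L₂
  pres : ∀ a l, inc₁ a l ↔ inc₂ (pt a) (ln l)

/-- A correlation of one incidence structure onto another: a pair of bijections,
points to lines and lines to points, reversing incidence. -/
structure Correlation {P₀ L₀ P₁ L₁ : Type*} (inc₀ : P₀ → L₀ → Prop) (inc₁ : P₁ → L₁ → Prop) where
  toLines : P₀ ≃ L₁
  toPoints : L₀ ≃ P₁
  rev : ∀ a l, inc₀ a l ↔ inc₁ (toPoints l) (toLines a)

/-- A closed substructure. -/
def IsClosedSub {P L : Type*} (inc : P → L → Prop) (B' : Set P) (B'' : Set L) : Prop :=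
  (∀ a₁ a₂ l, a₁ ∈ B' → a₂ ∈ B' → a₁ ≠ a₂ → inc a₁ l → inc a₂ l → l ∈ B'') ∧
  (∀ l₁ l₂ a, l₁ ∈ B'' → l₂ ∈ B'' → l₁ ≠ l₂ → inc a l₁ → inc a l₂ → a ∈ B')

/-- One incidence step (within a substructure) between elements (points or lines). -/
def IncStep {P L : Type*} (inc : P → L → Prop) (B' : Set P) (B'' : Set L) :
    (P ⊕ L) → (P ⊕ L) → Prop :=
  fun x y => ∃ a l, a ∈ B' ∧ l ∈ B'' ∧ inc a l ∧
    ((x = Sum.inl a ∧ y = Sum.inr l) ∨ (x = Sum.inr l ∧ y = Sum.inl a))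

/-- Connectivity of a substructure: any two of its elements are joined by a finite
chain of incidences within it. -/
def SubConnected {P L : Type*} (inc : P → L → Prop) (B' : Set P) (B'' : Set L) : Prop :=
  ∀ x y : P ⊕ L, Sum.elim (· ∈ B') (· ∈ B'') x → Sum.elim (· ∈ B') (· ∈ B'') y →
    Relation.ReflTransGen (IncStep inc B' B'') x y

/-- Connectivity of the whole incidence structure. -/
def ConnectedPLS {P L : Type*} (inc : P → L → Prop) : Prop :=
  SubConnected inc Set.univ Set.univ

/-- Collinearity of two points. -/
def Collin {P L : Type*} (inc : P → L → Prop) (a b : P) : Prop := ∃ l, inc a l ∧ inc b l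

/-- A triangle: three pairwise collinear points which are not on a common line. -/
def IsTriangle {P L : Type*} (inc : P → L → Prop) (a b c : P) : Prop :=
  a ≠ b ∧ b ≠ c ∧ a ≠ c ∧ Collin inc a b ∧ Collin inc b c ∧ Collin inc a c ∧
    ¬ ∃ l, inc a l ∧ inc b l ∧ inc c l

/-- The Shult axiom (Γ-space). -/
def Shultenian {P L : Type*} (inc : P → L → Prop) : Prop :=
  ∀ a b c d l, IsTriangle inc a b c → inc a l → inc b l → inc d l → Collin inc d c

/-- Degree of a point: the number of lines through it. -/
noncomputable def ptDeg {P L : Type*} (inc : P → L → Prop) (p : P) : ℕ :=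
  Set.ncard {l | inc p l}

/-- Size of a line: the number of points on it. -/
noncomputable def lnSize {P L : Type*} (inc : P → L → Prop) (l : L) : ℕ :=
  Set.ncard {p | inc p l}

/-- `G` is a cyclic group (with distinguished generator `1`) which is either
infinite or of even order greater than `2`. -/
def GoodGroup (G : Type*) [CommRing G] : Prop :=
  Nonempty (G ≃+* ℤ) ∨ ∃ k : ℕ, 2 < k ∧ Even k ∧ Nonempty (G ≃+* ZMod k)

/-- `I` is (as a cyclic group with generator `1`) either `ℤ` or `C_k`. -/
def CyclicIndex (I : Type*) [CommRing I] : Prop :=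
  Nonempty (I ≃+* ℤ) ∨ ∃ k : ℕ, 0 < k ∧ Nonempty (I ≃+* ZMod k)

/-- Incidence on the disjoint union `S ⊕ L`, in either direction. -/
def dualInc {S L : Type*} (inc0 : S → L → Prop) : (S ⊕ L) → (S ⊕ L) → Prop
  | Sum.inl a, Sum.inr b => inc0 a b
  | Sum.inr b, Sum.inl a => inc0 a b
  | _, _ => False

/-- Points of the multiplied structure `⊛_G(∘, M₀)`. -/
def starPt (G : Type*) [CommRing G] (S L : Type*) : Set (G × (S ⊕ L)) :=
  {p | (Even p.1 ∧ ∃ a : S, p.2 = Sum.inl a) ∨ (¬ Even p.1 ∧ ∃ l : L, p.2 = Sum.inr l)}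

/-- Lines of the multiplied structure `⊛_G(∘, M₀)`. -/
def starLn (G : Type*) [CommRing G] (S L : Type*) : Set (G × (S ⊕ L)) :=
  {q | (Even q.1 ∧ ∃ l : L, q.2 = Sum.inr l) ∨ (¬ Even q.1 ∧ ∃ a : S, q.2 = Sum.inl a)}

/-- Incidence of the multiplied structure `⊛_G(∘, M₀)`:
`(i,a) I [j,b]` iff (`i = j` and `a I₀ b` or `b I₀ a`) or (`i = j + 1` and `a = b`). -/
def starInc (G : Type*) [CommRing G] {S L : Type*} (inc0 : S → L → Prop) :
    ↥(starPt G S L) → ↥(starLn G S L) → Prop :=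
  fun p l => (p.val.1 = l.val.1 ∧ dualInc inc0 p.val.2 l.val.2) ∨
    (p.val.1 = l.val.1 + 1 ∧ p.val.2 = l.val.2)

/-- The relation `⊹` on `⊛_G(∘, M₀)`: `p ⊹ l` iff `p I l` and `i = j + 1`. -/
def starDod (G : Type*) [CommRing G] {S L : Type*} (inc0 : S → L → Prop)
    (p : ↥(starPt G S L)) (l : ↥(starLn G S L)) : Prop :=
  starInc G inc0 p l ∧ p.val.1 = l.val.1 + 1

/-- The relation `⊹₁`. -/
def dod1 {P L : Type*} (inc : P → L → Prop) (p : P) (l : L) : Prop :=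
  inc p l ∧ ∃ q, q ≠ p ∧ inc q l ∧ ∀ k m n, l ≠ k → l ≠ m → l ≠ n → m ≠ n →
    inc q k → inc p m → inc p n → (∃ x, inc x k ∧ inc x m) → ¬ ∃ x, inc x k ∧ inc x n

/-- The relation `◁`: `a ◁ l` iff `a` is not on `l` and there is exactly one line
through `a` missing `l`. -/
def corrRel {P L : Type*} (inc : P → L → Prop) (a : P) (l : L) : Prop :=
  ¬ inc a l ∧ ∃! m, inc a m ∧ ¬ ∃ x, inc x l ∧ inc x m

/-- The relation `⊹₂`. -/
def dod2 {P L : Type*} (inc : P → L → Prop) (p : P) (l : L) : Prop :=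
  inc p l ∧ ∃ a, ¬ Collin inc p a ∧ corrRel inc a l

/-- The family `{B_i}` is a covering of the structure by connected closed
substructures satisfying conditions (1)-(7). -/
def GoodCover {P L I : Type*} (inc : P → L → Prop) (B' : I → Set P) (B'' : I → Set L) : Prop :=
  (∀ p, ∃ i, p ∈ B' i) ∧ (∀ l, ∃ i, l ∈ B'' i) ∧
  (∀ i, IsClosedSub inc (B' i) (B'' i)) ∧
  (∀ i, SubConnected inc (B' i) (B'' i)) ∧
  (∀ i₁ i₂, (B' i₁ ∩ B' i₂).Nonempty → B' i₁ = B' i₂) ∧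
  (∀ i₁ i₂, (B'' i₁ ∩ B'' i₂).Nonempty → B'' i₁ = B'' i₂) ∧
  (∀ i, ∀ d ∈ B' i, ∃ m, inc d m ∧ m ∉ B'' i) ∧
  (∀ i, ∀ m ∈ B'' i, ∃ d, inc d m ∧ d ∉ B' i) ∧
  (∀ i, IsClosedSub inc (B' i)ᶜ (B'' i)ᶜ) ∧
  (∀ (i : I) (p : P) (m₁ m₂ m₃ : L) (d₁ d₂ d₃ : P),
    inc p m₁ → inc p m₂ → inc p m₃ → inc d₁ m₁ → inc d₂ m₂ → inc d₃ m₃ →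
    m₁ ∈ B'' i → m₂ ∈ B'' i → m₃ ∈ B'' i → d₁ ∉ B' i → d₂ ∉ B' i → d₃ ∉ B' i →
    ∃ n, inc d₁ n ∧ inc d₂ n ∧ inc d₃ n) ∧
  (∀ (i : I) (n : L) (d₁ d₂ d₃ : P) (m₁ m₂ m₃ : L),
    inc d₁ n → inc d₂ n → inc d₃ n → inc d₁ m₁ → inc d₂ m₂ → inc d₃ m₃ →
    d₁ ∈ B' i → d₂ ∈ B' i → d₃ ∈ B' i → m₁ ∉ B'' i → m₂ ∉ B'' i → m₃ ∉ B'' i →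
    ∃ q, inc q m₁ ∧ inc q m₂ ∧ inc q m₃)

/-- The relation `ρ` on the index set: `j ρ i` iff `j ≠ i` and some line of `B''_j`
is incident with some point of `B'_i`. -/
def rhoRel {P L I : Type*} (inc : P → L → Prop) (B' : I → Set P) (B'' : I → Set L)
    (j i : I) : Prop :=
  j ≠ i ∧ ∃ l ∈ B'' j, ∃ a ∈ B' i, inc a l

/-- The relation `⊹` determined by a covering: `a ⊹ m` iff `a I m` and no member of
the covering contains both `a` and `m`. -/
def dodRel {P L I : Type*} (inc : P → L → Prop) (B' : I → Set P) (B'' : I → Set L)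
    (a : P) (m : L) : Prop :=
  inc a m ∧ ¬ ∃ i, a ∈ B' i ∧ m ∈ B'' i

/-- Incidence of the structure `⊛_{i∈I}(M_i, φ_i)` obtained by glueing the family
`(M_i)` along the correlations `φ_i`. -/
def glueInc {I : Type*} [CommRing I] {P Lf : I → Type*} (inc : ∀ i, P i → Lf i → Prop)
    (φ : ∀ i, Correlation (inc i) (inc (i + 1))) :
    (Σ i, P i) → (Σ i, Lf i) → Prop :=
  fun p l => (∃ (i : I) (a : P i) (m : Lf i), p = ⟨i, a⟩ ∧ l = ⟨i, m⟩ ∧ inc i a m) ∨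
    (∃ (j : I) (m : Lf j), p = ⟨j + 1, (φ j).toPoints m⟩ ∧ l = ⟨j, m⟩)

/-- The composite `φ_{n-1} ∘ ⋯ ∘ φ_1 ∘ φ_0` acting on the elements of `M₀`. -/
def corrChain {I : Type*} [CommRing I] {P Lf : I → Type*} (inc : ∀ i, P i → Lf i → Prop)
    (φ : ∀ i, Correlation (inc i) (inc (i + 1))) :
    (n : ℕ) → (P 0 ⊕ Lf 0) → (P (n : I) ⊕ Lf (n : I))
  | 0 => cast (by rw [Nat.cast_zero])
  | n + 1 => fun x =>
      cast (by rw [Nat.cast_add_one])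
        (Sum.elim (fun a => Sum.inr ((φ (n : I)).toLines a))
          (fun m => Sum.inl ((φ (n : I)).toPoints m)) (corrChain inc φ n x))

/-- The correlative multiplying `⊛_k(κ₀, M₀)`. -/
def corInc {S L : Type*} (k : ℕ) (inc0 : S → L → Prop) (kap : L → S) :
    ZMod k × S → ZMod k × L → Prop :=
  fun p l => (p.1 = l.1 ∧ inc0 p.2 l.2) ∨ (p.1 = l.1 + 1 ∧ p.2 = kap l.2)

theorem Relation.ReflTransGen.comp_self_of_bipartite {α : Type*} {r : α → α → Prop}
    {c : α → Bool} (hc : ∀ x y, r x y → c y = !c x) {x y : α}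
    (h : Relation.ReflTransGen r x y) (hxy : c x = c y) :
    Relation.ReflTransGen (Relation.Comp r r) x y := by
  suffices ∀ y, Relation.ReflTransGen r x y →
      (c x = c y → Relation.ReflTransGen (Relation.Comp r r) x y) ∧
      (c x ≠ c y → ∃ z, Relation.ReflTransGen (Relation.Comp r r) x z ∧ r z y) from
    (this y h).1 hxy
  intro y h
  induction h with
  | refl => exact ⟨fun _ => .refl, fun h => absurd rfl h⟩
  | @tail b d _ hbd ih =>
    have hcd := hc b d hbd
    constructor
    · intro hxd
      obtain ⟨z, hxz, hzb⟩ := ih.2 (by cases hb : c b <;> simp_all)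
      exact hxz.tail ⟨b, hzb, hbd⟩
    · intro hxd
      exact ⟨b, ih.1 (by cases hb : c b <;> simp_all), hbd⟩

theorem Equiv.reflTransGen_apply_iff {α β : Type*} {r : α → α → Prop} {s : β → β → Prop}
    (e : α ≃ β) (h : ∀ a b, s (e a) (e b) ↔ r a b) {a b : α} :
    Relation.ReflTransGen s (e a) (e b) ↔ Relation.ReflTransGen r a b := by
  refine ⟨fun hs => ?_, fun hr => hr.lift e fun x y => (h x y).mpr⟩
  simpa [Function.onFun] using hs.lift e.symm fun x y hxy => (h _ _).mp (by simpa using hxy)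

theorem Equiv.image_setOf_reflTransGen {α β : Type*} {r : α → α → Prop} {s : β → β → Prop}
    (e : α ≃ β) (h : ∀ a b, s (e a) (e b) ↔ r a b) (a : α) :
    e '' {b | Relation.ReflTransGen r a b} = {c | Relation.ReflTransGen s (e a) c} := by
  ext c
  obtain ⟨b, rfl⟩ := e.surjective c
  simp [e.reflTransGen_apply_iff h]

theorem ZMod.even_iff_castHom_eq_zero {k : ℕ} [NeZero k] (hk : 2 ∣ k) (y : ZMod k) :
    Even y ↔ ZMod.castHom hk (ZMod 2) y = 0 := by
  obtain ⟨n, rfl⟩ := ZMod.natCast_zmod_surjective y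
  rw [map_natCast, ZMod.natCast_eq_zero_iff_even]
  refine ⟨fun ⟨c, hc⟩ => ?_, fun ⟨m, hm⟩ => ⟨m, by rw [hm, Nat.cast_add]⟩⟩
  have h2 := congrArg (ZMod.castHom hk (ZMod 2)) hc
  rw [map_natCast, map_add, CharTwo.add_self_eq_zero, ZMod.natCast_eq_zero_iff_even] at h2
  exact h2

theorem GoodGroup.exists_ringHom_zmod_two {G : Type*} [CommRing G] (hG : GoodGroup G) :
    ∃ φ : G →+* ZMod 2, ∀ x, Even x ↔ φ x = 0 := by
  have transfer : ∀ {R : Type} [CommRing R] (e : G ≃+* R) (ψ : R →+* ZMod 2),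
      (∀ y, Even y ↔ ψ y = 0) → ∃ φ : G →+* ZMod 2, ∀ x, Even x ↔ φ x = 0 := by
    intro R _ e ψ hψ
    refine ⟨ψ.comp e.toRingHom, fun x => ?_⟩
    rw [RingHom.comp_apply, ← hψ, even_iff_two_dvd, even_iff_two_dvd, ← map_dvd_iff e,
      map_ofNat]
    rfl
  rcases hG with ⟨⟨e⟩⟩ | ⟨k, hk2, hk, ⟨e⟩⟩
  · exact transfer e (Int.castRingHom (ZMod 2)) fun n => (ZMod.intCast_eq_zero_iff_even).symm
  · have : NeZero k := ⟨by omega⟩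
    exact transfer e _ (ZMod.even_iff_castHom_eq_zero hk.two_dvd)

theorem GoodGroup.even_add_one_iff {G : Type*} [CommRing G] (hG : GoodGroup G) (x : G) :
    Even (x + 1) ↔ ¬ Even x := by
  obtain ⟨φ, hφ⟩ := hG.exists_ringHom_zmod_two
  rw [hφ, hφ, map_add, map_one]
  generalize φ x = z
  revert z
  decide

theorem one_ne_zero_of_even_add_one_iff {G : Type*} [CommRing G]
    (hpar : ∀ x : G, Even (x + 1) ↔ ¬ Even x) : (1 : G) ≠ 0 :=
  fun h => (hpar 0).mp (by simp [h]) Even.zero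

namespace IncIso

variable {P₁ L₁ P₂ L₂ : Type*} {inc₁ : P₁ → L₁ → Prop} {inc₂ : P₂ → L₂ → Prop}

theorem ptDeg_pt (f : IncIso inc₁ inc₂) (p : P₁) : ptDeg inc₂ (f.pt p) = ptDeg inc₁ p := by
  have : {l | inc₂ (f.pt p) l} = f.ln '' {l | inc₁ p l} := by
    ext l
    simp [f.ln.image_eq_preimage_symm, f.pres]
  rw [ptDeg, ptDeg, this, Set.ncard_image_of_injective _ f.ln.injective]

theorem lnSize_ln (f : IncIso inc₁ inc₂) (l : L₁) : lnSize inc₂ (f.ln l) = lnSize inc₁ l := by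
  have : {p | inc₂ p (f.ln l)} = f.pt '' {p | inc₁ p l} := by
    ext p
    simp [f.pt.image_eq_preimage_symm, f.pres]
  rw [lnSize, lnSize, this, Set.ncard_image_of_injective _ f.pt.injective]

end IncIso

section Star

variable {G : Type*} [CommRing G] {S L : Type*} {inc0 : S → L → Prop}

theorem dualInc_comm {x y : S ⊕ L} : dualInc inc0 x y ↔ dualInc inc0 y x := by
  cases x <;> cases y <;> simp [dualInc]

theorem dualInc.isLeft_eq {x y : S ⊕ L} (h : dualInc inc0 x y) : y.isLeft = !x.isLeft := by
  cases x <;> cases y <;> simp_all [dualInc]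

theorem exists_dualInc (hPLS : IsPLS inc0) (y : S ⊕ L) : ∃ x, dualInc inc0 x y := by
  cases y with
  | inl a =>
    obtain ⟨m, -, -, ha, -⟩ := hPLS.2.1 a
    exact ⟨.inr m, ha⟩
  | inr m =>
    obtain ⟨a, -, -, ha, -⟩ := hPLS.1 m
    exact ⟨.inl a, ha⟩

theorem ConnectedPLS.reflTransGen_dualInc (hconn : ConnectedPLS inc0) (x y : S ⊕ L) :
    Relation.ReflTransGen (dualInc inc0) x y := by
  refine Relation.ReflTransGen.mono (fun u v huv => ?_) _ _
    (hconn x y (by cases x <;> trivial) (by cases y <;> trivial))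
  obtain ⟨a, l, -, -, hal, ⟨rfl, rfl⟩ | ⟨rfl, rfl⟩⟩ := huv <;> exact hal

noncomputable def dualDeg (inc0 : S → L → Prop) (x : S ⊕ L) : ℕ :=
  Set.ncard {y | dualInc inc0 x y}

theorem dualDeg_inl (a : S) : dualDeg inc0 (.inl a) = ptDeg inc0 a := by
  have : {y | dualInc inc0 (.inl a) y} = Sum.inr '' {l | inc0 a l} := by
    ext (b | l) <;> simp [dualInc]
  rw [dualDeg, this, Set.ncard_image_of_injective _ Sum.inr_injective, ptDeg]

theorem dualDeg_inr (l : L) : dualDeg inc0 (.inr l) = lnSize inc0 l := by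
  have : {y | dualInc inc0 (.inr l) y} = Sum.inl '' {a | inc0 a l} := by
    ext (b | m) <;> simp [dualInc]
  rw [dualDeg, this, Set.ncard_image_of_injective _ Sum.inl_injective, lnSize]

theorem dualDeg_ne_of_dualInc (hsep : ∀ a l, inc0 a l → ptDeg inc0 a ≠ lnSize inc0 l)
    {x y : S ⊕ L} (h : dualInc inc0 x y) : dualDeg inc0 x ≠ dualDeg inc0 y := by
  cases x <;> cases y <;> simp only [dualInc] at h
  · rw [dualDeg_inl, dualDeg_inr]; exact hsep _ _ h
  · rw [dualDeg_inl, dualDeg_inr]; exact (hsep _ _ h).symm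

theorem mem_starPt_iff_mem_starLn_of_dualInc {i : G} {x y : S ⊕ L} (h : dualInc inc0 x y) :
    (i, x) ∈ starPt G S L ↔ (i, y) ∈ starLn G S L := by
  cases x <;> cases y <;> simp_all [dualInc, starPt, starLn]

theorem mem_starLn_iff_add_one_mem_starPt (hpar : ∀ x : G, Even (x + 1) ↔ ¬ Even x) {i : G}
    {x : S ⊕ L} : (i, x) ∈ starLn G S L ↔ (i + 1, x) ∈ starPt G S L := by
  cases x <;> simp [starPt, starLn, hpar]

end Star

section StarDeg

variable {G : Type*} [CommRing G] {S L : Type*} [Finite S] [Finite L] {inc0 : S → L → Prop}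

theorem ptDeg_starInc (hpar : ∀ x : G, Even (x + 1) ↔ ¬ Even x) (p : starPt G S L) :
    ptDeg (starInc G inc0) p = dualDeg inc0 p.val.2 + 1 := by
  obtain ⟨⟨i, x⟩, hp⟩ := p
  have hlines : Subtype.val '' {l | starInc G inc0 ⟨(i, x), hp⟩ l}
      = insert (i - 1, x) (Prod.mk i '' {y | dualInc inc0 x y}) := by
    ext ⟨j, y⟩
    simp only [starInc, Set.mem_image, Set.mem_ofPred_eq, Set.mem_insert_iff, Subtype.exists,
      exists_and_right, exists_eq_right, Prod.mk.injEq]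
    constructor
    · rintro ⟨-, ⟨rfl, h⟩ | ⟨rfl, rfl⟩⟩
      · exact .inr ⟨y, h, rfl, rfl⟩
      · exact .inl ⟨by ring, rfl⟩
    · rintro (⟨rfl, rfl⟩ | ⟨y, h, rfl, rfl⟩)
      · exact ⟨(mem_starLn_iff_add_one_mem_starPt hpar).mpr (by simpa using hp),
          .inr ⟨by ring, rfl⟩⟩
      · exact ⟨(mem_starPt_iff_mem_starLn_of_dualInc h).mp hp, .inl ⟨rfl, h⟩⟩
  have hnotMem : (i - 1, x) ∉ Prod.mk i '' {y | dualInc inc0 x y} := by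
    rintro ⟨y, -, hy⟩
    exact one_ne_zero_of_even_add_one_iff hpar (by linear_combination congrArg Prod.fst hy)
  rw [ptDeg, ← Set.ncard_image_of_injective _ Subtype.val_injective, hlines,
    Set.ncard_insert_of_notMem hnotMem, Set.ncard_image_of_injective _ (Prod.mk_right_injective i),
    dualDeg]

theorem lnSize_starInc (hpar : ∀ x : G, Even (x + 1) ↔ ¬ Even x) (l : starLn G S L) :
    lnSize (starInc G inc0) l = dualDeg inc0 l.val.2 + 1 := by
  obtain ⟨⟨i, x⟩, hl⟩ := l
  have hpoints : Subtype.val '' {p | starInc G inc0 p ⟨(i, x), hl⟩}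
      = insert (i + 1, x) (Prod.mk i '' {y | dualInc inc0 x y}) := by
    ext ⟨j, y⟩
    simp only [starInc, Set.mem_image, Set.mem_ofPred_eq, Set.mem_insert_iff, Subtype.exists,
      exists_and_right, exists_eq_right, Prod.mk.injEq]
    constructor
    · rintro ⟨-, ⟨rfl, h⟩ | ⟨rfl, rfl⟩⟩
      · exact .inr ⟨y, dualInc_comm.mp h, rfl, rfl⟩
      · exact .inl ⟨rfl, rfl⟩
    · rintro (⟨rfl, rfl⟩ | ⟨y, h, rfl, rfl⟩)
      · exact ⟨(mem_starLn_iff_add_one_mem_starPt hpar).mp hl, .inr ⟨rfl, rfl⟩⟩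
      · exact ⟨(mem_starPt_iff_mem_starLn_of_dualInc (dualInc_comm.mp h)).mpr hl,
          .inl ⟨rfl, dualInc_comm.mp h⟩⟩
  have hnotMem : (i + 1, x) ∉ Prod.mk i '' {y | dualInc inc0 x y} := by
    rintro ⟨y, -, hy⟩
    exact one_ne_zero_of_even_add_one_iff hpar (by linear_combination -congrArg Prod.fst hy)
  rw [lnSize, ← Set.ncard_image_of_injective _ Subtype.val_injective, hpoints,
    Set.ncard_insert_of_notMem hnotMem, Set.ncard_image_of_injective _ (Prod.mk_right_injective i),
    dualDeg]

end StarDeg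

section Layers

variable {G : Type*} [CommRing G] {S L : Type*} {inc0 : S → L → Prop}

/-- Incidence inside one copy `im(ε_i)` of `M₀`. -/
def layerInc (G : Type*) [CommRing G] {S L : Type*} (inc0 : S → L → Prop)
    (p : starPt G S L) (l : starLn G S L) : Prop :=
  p.val.1 = l.val.1 ∧ starInc G inc0 p l

def layerCollin (G : Type*) [CommRing G] {S L : Type*} (inc0 : S → L → Prop)
    (p q : starPt G S L) : Prop :=
  ∃ l, layerInc G inc0 p l ∧ layerInc G inc0 q l

theorem starInc_fst_eq_iff [Finite S] [Finite L] (hpar : ∀ x : G, Even (x + 1) ↔ ¬ Even x)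
    (hsep : ∀ a l, inc0 a l → ptDeg inc0 a ≠ lnSize inc0 l)
    {p : starPt G S L} {l : starLn G S L} (h : starInc G inc0 p l) :
    p.val.1 = l.val.1 ↔ lnSize (starInc G inc0) l ≠ ptDeg (starInc G inc0) p := by
  rw [ptDeg_starInc hpar, lnSize_starInc hpar, Ne, add_left_inj]
  rcases h with ⟨hfst, hinc⟩ | ⟨hfst, hsnd⟩
  · exact iff_of_true hfst (dualDeg_ne_of_dualInc hsep hinc).symm
  · refine iff_of_false (fun h => one_ne_zero_of_even_add_one_iff hpar ?_) (by simp [hsnd])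
    linear_combination hfst.symm.trans h

theorem IncIso.layerInc_iff [Finite S] [Finite L] (hpar : ∀ x : G, Even (x + 1) ↔ ¬ Even x)
    (hsep : ∀ a l, inc0 a l → ptDeg inc0 a ≠ lnSize inc0 l)
    (f : IncIso (starInc G inc0) (starInc G inc0)) {p : starPt G S L} {l : starLn G S L} :
    layerInc G inc0 (f.pt p) (f.ln l) ↔ layerInc G inc0 p l := by
  rw [layerInc, layerInc, ← f.pres, and_congr_left_iff]
  intro h
  rw [starInc_fst_eq_iff hpar hsep h, starInc_fst_eq_iff hpar hsep ((f.pres p l).mp h),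
    f.ptDeg_pt, f.lnSize_ln]

theorem IncIso.layerCollin_iff [Finite S] [Finite L]
    (hpar : ∀ x : G, Even (x + 1) ↔ ¬ Even x)
    (hsep : ∀ a l, inc0 a l → ptDeg inc0 a ≠ lnSize inc0 l)
    (f : IncIso (starInc G inc0) (starInc G inc0)) (p q : starPt G S L) :
    layerCollin G inc0 (f.pt p) (f.pt q) ↔ layerCollin G inc0 p q := by
  rw [layerCollin, f.ln.surjective.exists]
  simp only [f.layerInc_iff hpar hsep, layerCollin]

theorem layerCollin.fst_eq {p q : starPt G S L} (h : layerCollin G inc0 p q) :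
    p.val.1 = q.val.1 := by
  obtain ⟨l, ⟨hp, -⟩, ⟨hq, -⟩⟩ := h
  rw [hp, hq]

theorem reflTransGen_layerCollin_of_reflTransGen {i : G} {x y : S ⊕ L}
    (h : Relation.ReflTransGen (Relation.Comp (dualInc inc0) (dualInc inc0)) x y)
    (hx : (i, x) ∈ starPt G S L) (hy : (i, y) ∈ starPt G S L) :
    Relation.ReflTransGen (layerCollin G inc0) ⟨(i, x), hx⟩ ⟨(i, y), hy⟩ := by
  induction h with
  | refl => exact .refl
  | @tail b c _ hbc ih =>
    obtain ⟨w, hbw, hwc⟩ := hbc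
    have hcw := dualInc_comm.mp hwc
    have hw : (i, w) ∈ starLn G S L := (mem_starPt_iff_mem_starLn_of_dualInc hcw).mp hy
    have hb : (i, b) ∈ starPt G S L := (mem_starPt_iff_mem_starLn_of_dualInc hbw).mpr hw
    exact (ih hb).tail ⟨⟨(i, w), hw⟩, ⟨rfl, .inl ⟨rfl, hbw⟩⟩, ⟨rfl, .inl ⟨rfl, hcw⟩⟩⟩

theorem reflTransGen_layerCollin_iff (hconn : ConnectedPLS inc0) {p q : starPt G S L} :
    Relation.ReflTransGen (layerCollin G inc0) p q ↔ p.val.1 = q.val.1 := by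
  refine ⟨fun h => ?_, fun h => ?_⟩
  · induction h with
    | refl => rfl
    | tail _ hbc ih => exact ih.trans hbc.fst_eq
  · obtain ⟨⟨i, x⟩, hp⟩ := p
    obtain ⟨⟨j, y⟩, hq⟩ := q
    obtain rfl : i = j := h
    refine reflTransGen_layerCollin_of_reflTransGen ?_ hp hq
    refine (hconn.reflTransGen_dualInc x y).comp_self_of_bipartite
      (fun _ _ h => h.isLeft_eq) ?_
    cases x <;> cases y <;> simp_all [starPt]

theorem setOf_fst_eq_starLn (hPLS : IsPLS inc0) (i : G) :
    {l : starLn G S L | l.val.1 = i} = {l | ∃ p, p.val.1 = i ∧ layerInc G inc0 p l} := by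
  ext ⟨⟨j, y⟩, hl⟩
  simp only [Set.mem_ofPred_eq]
  constructor
  · rintro rfl
    obtain ⟨x, hx⟩ := exists_dualInc hPLS y
    exact ⟨⟨(j, x), (mem_starPt_iff_mem_starLn_of_dualInc hx).mpr hl⟩, rfl, rfl, .inl ⟨rfl, hx⟩⟩
  · rintro ⟨p, rfl, hpl, -⟩
    exact hpl.symm

end Layers

section Cover

variable {G : Type*} [CommRing G] {S L : Type*} [Finite S] [Finite L] {inc0 : S → L → Prop}

theorem IncIso.image_setOf_fst_eq_pt (hpar : ∀ x : G, Even (x + 1) ↔ ¬ Even x)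
    (hsep : ∀ a l, inc0 a l → ptDeg inc0 a ≠ lnSize inc0 l) (hconn : ConnectedPLS inc0)
    (f : IncIso (starInc G inc0) (starInc G inc0)) (p₀ : starPt G S L) :
    f.pt '' {p | p.val.1 = p₀.val.1} = {p | p.val.1 = (f.pt p₀).val.1} := by
  have hlayer : ∀ q : starPt G S L,
      {p : starPt G S L | p.val.1 = q.val.1} =
        {p | Relation.ReflTransGen (layerCollin G inc0) q p} := by
    intro q
    ext p
    simp [reflTransGen_layerCollin_iff hconn, eq_comm]
  rw [hlayer, hlayer, f.pt.image_setOf_reflTransGen (f.layerCollin_iff hpar hsep)]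

theorem IncIso.image_setOf_fst_eq_ln (hPLS : IsPLS inc0)
    (hpar : ∀ x : G, Even (x + 1) ↔ ¬ Even x)
    (hsep : ∀ a l, inc0 a l → ptDeg inc0 a ≠ lnSize inc0 l)
    (f : IncIso (starInc G inc0) (starInc G inc0)) {i j : G}
    (hpt : f.pt '' {p | p.val.1 = i} = {p | p.val.1 = j}) :
    f.ln '' {l | l.val.1 = i} = {l | l.val.1 = j} := by
  have hfst : ∀ p, (f.pt p).val.1 = j ↔ p.val.1 = i := fun p => by
    simpa only [f.pt.injective.mem_set_image, Set.mem_ofPred_eq] using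
      (Set.ext_iff.mp hpt (f.pt p)).symm
  rw [setOf_fst_eq_starLn hPLS, setOf_fst_eq_starLn hPLS]
  ext l'
  obtain ⟨l, rfl⟩ := f.ln.surjective l'
  simp only [f.ln.injective.mem_set_image, Set.mem_ofPred_eq]
  conv_rhs => rw [f.pt.surjective.exists]
  simp only [hfst, f.layerInc_iff hpar hsep]

end Cover

/-- if `M₀` is a connected finite PLS with constant point degree `κ`
and constant line size `ρ ≠ κ`, then every automorphism of `⊛_G(∘, M₀)` permutes
the covering `{im(ε_i) : i ∈ G}` by closed substructures. -/
theorem star_automorphism_preserves_cover {G : Type} [CommRing G] (hG : GoodGroup G)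
    {S L : Type} [Finite S] [Finite L] (inc0 : S → L → Prop) (hPLS : IsPLS inc0)
    (hconn : ConnectedPLS inc0)
    (κ ρ : ℕ) (hdeg : ∀ a, ptDeg inc0 a = κ) (hsize : ∀ l, lnSize inc0 l = ρ)
    (hne : ρ ≠ κ) :
    ∀ (f : IncIso (starInc G inc0) (starInc G inc0)) (i : G), ∃ j : G,
      f.pt '' {p : ↥(starPt G S L) | p.val.1 = i} = {p : ↥(starPt G S L) | p.val.1 = j} ∧
      f.ln '' {l : ↥(starLn G S L) | l.val.1 = i} = {l : ↥(starLn G S L) | l.val.1 = j} := by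
  intro f i
  have hpar := hG.even_add_one_iff
  have hsep : ∀ a l, inc0 a l → ptDeg inc0 a ≠ lnSize inc0 l := fun a l _ => by
    rw [hdeg, hsize]
    exact hne.symm
  obtain ⟨j, hpt⟩ : ∃ j, f.pt '' {p : starPt G S L | p.val.1 = i} = {p | p.val.1 = j} := by
    by_cases h : ∃ p₀ : starPt G S L, p₀.val.1 = i
    · obtain ⟨p₀, rfl⟩ := h
      exact ⟨_, f.image_setOf_fst_eq_pt hpar hsep hconn p₀⟩
    · have hempty : {p : starPt G S L | p.val.1 = i} = ∅ :=
        Set.eq_empty_of_forall_notMem fun p hp => h ⟨p, hp⟩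
      exact ⟨i, by rw [hempty, Set.image_empty]⟩
  exact ⟨j, hpt, f.image_setOf_fst_eq_ln hPLS hpar hsep hpt⟩
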